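/- arXiv:1605.03530 — 3 statements merged into one kernel-verified Lean document; each statement's English description precedes it below -/
import Mathlib

section
/- Let q be a prime power, n ≥ 4 an even integer, and V = F_q^n equipped with a nondegenerate alternating bilinear form f; let Sp(n,q) be the group of f-preserving linear automorphisms of V and let e₁ be the first standard basis vector. Let G_0 be a subgroup of ΓL(n,q) containing Sp(n,q) as a normal subgroup. Suppose P is a nontrivial imprimitive block for the action of G_0 on V ∖ {0} with e₁ ∈ P. Then P ⊆ {a·e₁ : a ∈ F_q} and the set {a ∈ F_q^× : a·e₁ ∈ P} is a subgroup of the multiplicative group F_q^×. -/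
/-- Lemma 4.7 (part (a)): let q be a prime power, n ≥ 4 even, V = F_q^n with a
nondegenerate alternating bilinear form f, and let G₀ ≤ ΓL(n,q) contain
Sp(n,q) = {f-preserving linear automorphisms of V} as a normal subgroup. If P is a
nontrivial imprimitive block of G₀ on V ∖ {0} containing e₁, then P ⊆ ⟨e₁⟩ and
{a ∈ F_q^× : a·e₁ ∈ P} is a subgroup of F_q^×. -/
theorem stmt_17 {F : Type*} [Field F] [Fintype F]
    (n : ℕ) (hn4 : 4 ≤ n) (hneven : Even n)
    (f : (Fin n → F) → (Fin n → F) → F)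
    (hf_addl : ∀ u v w, f (u + v) w = f u w + f v w)
    (hf_addr : ∀ u v w, f u (v + w) = f u v + f u w)
    (hf_smull : ∀ (c : F) (u v), f (c • u) v = c * f u v)
    (hf_smulr : ∀ (c : F) (u v), f u (c • v) = c * f u v)
    (hf_alt : ∀ u, f u u = 0)
    (hf_nondeg : ∀ u, (∀ v, f u v = 0) → u = 0)
    (G₀ : Subgroup (Equiv.Perm (Fin n → F)))
    -- G₀ ≤ ΓL(n,q): every element of G₀ is an additive semilinear bijection
    (hGammaL : ∀ g ∈ G₀, (∀ u v, g (u + v) = g u + g v) ∧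
        ∃ σ : F ≃+* F, ∀ (c : F) (u), g (c • u) = σ c • g u)
    -- Sp(n,q) ⊆ G₀
    (hSp_sub : ∀ g : Equiv.Perm (Fin n → F),
        ((∀ u v, g (u + v) = g u + g v) ∧ (∀ (c : F) (u), g (c • u) = c • g u) ∧
          (∀ u v, f (g u) (g v) = f u v)) → g ∈ G₀)
    -- Sp(n,q) is normal in G₀
    (hSp_normal : ∀ g ∈ G₀, ∀ h : Equiv.Perm (Fin n → F),
        ((∀ u v, h (u + v) = h u + h v) ∧ (∀ (c : F) (u), h (c • u) = c • h u) ∧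
          (∀ u v, f (h u) (h v) = f u v)) →
        ((∀ u v, (g * h * g⁻¹) (u + v) = (g * h * g⁻¹) u + (g * h * g⁻¹) v) ∧
          (∀ (c : F) (u), (g * h * g⁻¹) (c • u) = c • (g * h * g⁻¹) u) ∧
          (∀ u v, f ((g * h * g⁻¹) u) ((g * h * g⁻¹) v) = f u v)))
    (P : Set (Fin n → F))
    (hP0 : ∀ v ∈ P, v ≠ 0)
    (hPe : (fun i : Fin n => if (i : ℕ) = 0 then (1 : F) else 0) ∈ P)
    (hPlarge : 1 < P.ncard)
    (hPsmall : P.ncard < Fintype.card (Fin n → F) - 1)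
    (hPblock : ∀ g ∈ G₀, ⇑g '' P = P ∨ (⇑g '' P) ∩ P = ∅) :
    (P ⊆ {v | ∃ a : F, v = a • fun i : Fin n => if (i : ℕ) = 0 then (1 : F) else 0}) ∧
    ∃ U : Subgroup Fˣ, ∀ a : Fˣ,
      ((a : F) • (fun i : Fin n => if (i : ℕ) = 0 then (1 : F) else 0) ∈ P ↔ a ∈ U) := by
  
  classical
  set e : Fin n → F := (fun i : Fin n => if (i : ℕ) = 0 then (1 : F) else 0) with he_def
  -- derived bilinearity facts
  have hskew : ∀ u v, f u v = - f v u := by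
    intro u v
    have h := hf_alt (u + v)
    rw [hf_addl, hf_addr, hf_addr, hf_alt u, hf_alt v] at h
    linear_combination h
  have hfsubr : ∀ u v w, f u (v - w) = f u v - f u w := by
    intro u v w
    have h : f u (v + (-1 : F) • w) = f u v + (-1) * f u w := by
      rw [hf_addr, hf_smulr]
    rw [neg_one_smul] at h
    rw [sub_eq_add_neg, h]; ring
  have hfsubl : ∀ u v w, f (u - v) w = f u w - f v w := by
    intro u v w
    have h : f (u + (-1 : F) • v) w = f u w + (-1) * f v w := by
      rw [hf_addl, hf_smull]
    rw [neg_one_smul] at h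
    rw [sub_eq_add_neg, h]; ring
  have hnd : ∀ u : Fin n → F, u ≠ 0 → ∃ w, f u w ≠ 0 := by
    intro u hu
    by_contra h
    push_neg at h
    exact hu (hf_nondeg u h)
  have h0n : (0:ℕ) < n := by omega
  have he0 : e ≠ 0 := by
    intro h
    have h1 : e ⟨0, h0n⟩ = 0 := by rw [h]; rfl
    rw [he_def] at h1
    simp at h1
  -- the pair lemma: for x nonzero and y off the line of x, f (x, ·), f (y, ·)
  -- jointly attain any pair of values
  have pair : ∀ x y : Fin n → F, x ≠ 0 → (∀ c : F, y ≠ c • x) →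
      ∀ α β : F, ∃ w, f x w = α ∧ f y w = β := by
    intro x y hx hy α β
    obtain ⟨a₀, ha₀⟩ := hnd x hx
    obtain ⟨a, hxa⟩ : ∃ a, f x a = 1 :=
      ⟨(f x a₀)⁻¹ • a₀, by rw [hf_smulr, inv_mul_cancel₀ ha₀]⟩
    have hyx : y - (f y a) • x ≠ 0 := sub_ne_zero.mpr (hy (f y a))
    obtain ⟨x₀, hx₀⟩ := hnd _ hyx
    obtain ⟨b, hxb, hybne⟩ : ∃ b, f x b = 0 ∧ f y b ≠ 0 := by
      refine ⟨x₀ - (f x x₀) • a, ?_, ?_⟩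
      · rw [hfsubr, hf_smulr, hxa]; ring
      · have hyb : f y (x₀ - (f x x₀) • a) = f (y - (f y a) • x) x₀ := by
          rw [hfsubr, hf_smulr, hfsubl, hf_smull]; ring
        rw [hyb]; exact hx₀
    refine ⟨α • a + ((β - α * f y a) / (f y b)) • b, ?_, ?_⟩
    · rw [hf_addr, hf_smulr, hf_smulr, hxa, hxb]; ring
    · rw [hf_addr, hf_smulr, hf_smulr, div_mul_cancel₀ _ hybne]; ring
  -- block-moving principle
  have hmove : ∀ g : Equiv.Perm (Fin n → F), g ∈ G₀ → ∀ p, p ∈ P → g p ∈ P →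
      ∀ q, q ∈ P → g q ∈ P := by
    intro g hg p hp hgp q hq
    rcases hPblock g hg with h | h
    · rw [← h]; exact ⟨q, hq, rfl⟩
    · have : g p ∈ (⇑g '' P) ∩ P := ⟨Set.mem_image_of_mem _ hp, hgp⟩
      rw [h] at this
      exact absurd this (Set.notMem_empty _)
  -- transvections
  have exT : ∀ (w : Fin n → F) (c : F), ∃ g : Equiv.Perm (Fin n → F),
      (∀ x, g x = x + (c * f x w) • w) ∧ g ∈ G₀ := by
    intro w c
    have key : ∀ x : Fin n → F, f (x + (c * f x w) • w) w = f x w := by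
      intro x; rw [hf_addl, hf_smull, hf_alt]; ring
    have key2 : ∀ x : Fin n → F, f (x - (c * f x w) • w) w = f x w := by
      intro x; rw [hfsubl, hf_smull, hf_alt]; ring
    refine ⟨⟨fun x => x + (c * f x w) • w, fun x => x - (c * f x w) • w, ?_, ?_⟩,
      fun _ => rfl, ?_⟩
    · intro x
      simp only []
      rw [key x]
      abel
    · intro x
      simp only []
      rw [key2 x]
      abel
    · apply hSp_sub
      refine ⟨?_, ?_, ?_⟩
      · intro u v
        show (u + v) + (c * f (u + v) w) • w = (u + (c * f u w) • w) + (v + (c * f v w) • w)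
        rw [hf_addl, mul_add, add_smul]
        abel
      · intro k u
        show (k • u) + (c * f (k • u) w) • w = k • (u + (c * f u w) • w)
        rw [hf_smull, smul_add, smul_smul, mul_left_comm]
      · intro u v
        show f (u + (c * f u w) • w) (v + (c * f v w) • w) = f u v
        rw [hf_addl, hf_smull, hf_addr, hf_smulr, hf_addr, hf_smulr, hf_alt w, hskew w v]
        ring
  -- moving within P by a transvection fixing a point of P
  have moveT : ∀ p, p ∈ P → ∀ y, f e (y - p) = 0 → f p y ≠ 0 → y ∈ P := by
    intro p hp y hey hpy
    obtain ⟨g, hgfor, hgG⟩ := exT (y - p) (f p (y - p))⁻¹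
    have hpyp : f p (y - p) = f p y := by rw [hfsubr, hf_alt]; ring
    have hge : g e = e := by
      rw [hgfor, hey, mul_zero, zero_smul, add_zero]
    have hgp : g p = y := by
      rw [hgfor, hpyp, inv_mul_cancel₀ hpy, one_smul]
      abel
    have h := hmove g hgG e hPe (by rw [hge]; exact hPe) p hp
    rwa [hgp] at h
  -- step A: P contains the whole affine hyperplane {y | f e y = f e v}
  have stepA : ∀ v, v ∈ P → f e v ≠ 0 → ∀ y, f e y = f e v → y ∈ P := by
    intro v hv hγ y hy
    by_cases hvy : f v y ≠ 0
    · exact moveT v hv y (by rw [hfsubr, hy]; ring) hvy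
    · push_neg at hvy
      have hy' : (v + e) ∈ P := by
        refine moveT v hv (v + e) ?_ ?_
        · rw [show v + e - v = e by abel]
          exact hf_alt e
        · rw [hf_addr, hf_alt, hskew v e]
          intro hcon
          apply hγ
          linear_combination -hcon
      refine moveT (v + e) hy' y ?_ ?_
      · rw [hfsubr, hf_addr, hf_alt, hy]; ring
      · rw [hf_addl, hvy, hy]
        simpa using hγ
  -- step B: P contains every vector off the line F e
  have stepB : ∀ v, v ∈ P → f e v ≠ 0 → ∀ z, (∀ c : F, z ≠ c • e) → z ∈ P := by
    intro v hv hγ z hz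
    by_cases hez : f e z = f e v
    · exact stepA v hv hγ z hez
    · obtain ⟨p, hpe, hpz⟩ := pair e z he0 hz (f e v) 1
      have hp : p ∈ P := stepA v hv hγ p hpe
      have hzp0 : ∀ c : F, z - p ≠ c • e := by
        intro c hcon
        apply hez
        have h1 : f e (z - p) = f e (c • e) := by rw [hcon]
        rw [hfsubr, hf_smulr, hf_alt, hpe] at h1
        linear_combination h1
      obtain ⟨p', hp'e, hp'zp⟩ := pair e (z - p) he0 hzp0 (f e v) 0
      have hp' : p' ∈ P := stepA v hv hγ p' hp'e
      obtain ⟨g, hgfor, hgG⟩ := exT (z - p) (f p (z - p))⁻¹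
      have hpzp : f p (z - p) = -1 := by
        rw [hfsubr, hf_alt, hskew p z, hpz]; ring
      have hp'0 : f p' (z - p) = 0 := by
        rw [hskew, hp'zp]; ring
      have hgp' : g p' = p' := by
        rw [hgfor, hp'0, mul_zero, zero_smul, add_zero]
      have hgp : g p = z := by
        rw [hgfor, hpzp]
        norm_num
      have h := hmove g hgG p' hp' (by rw [hgp']; exact hp') p hp
      rwa [hgp] at h
  -- the distinguished vector w₀ with f e w₀ = 1
  obtain ⟨w₀p, hw₀p⟩ := hnd e he0
  obtain ⟨w₀, hew₀⟩ : ∃ w₀, f e w₀ = 1 :=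
    ⟨(f e w₀p)⁻¹ • w₀p, by rw [hf_smulr, inv_mul_cancel₀ hw₀p]⟩
  have hw₀e : f w₀ e = -1 := by rw [hskew, hew₀]
  -- scaling maps
  have exS : ∀ lam : F, lam ≠ 0 → ∃ g : Equiv.Perm (Fin n → F),
      g ∈ G₀ ∧ (∀ b : F, g (b • e) = (lam * b) • e) ∧ g w₀ = lam⁻¹ • w₀ := by
    intro lam hlam
    have hml : lam * lam⁻¹ = 1 := mul_inv_cancel₀ hlam
    set σ : F → (Fin n → F) → (Fin n → F) :=
      fun μ x => x + ((μ - 1) * f x w₀) • e + ((μ⁻¹ - 1) * f e x) • w₀ with hσ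
    have hform : ∀ μ x, σ μ x = x + ((μ - 1) * f x w₀) • e + ((μ⁻¹ - 1) * f e x) • w₀ := by
      intro μ x; simp only [hσ]
    have hfw : ∀ μ x, f (σ μ x) w₀ = μ * f x w₀ := by
      intro μ x
      rw [hform, hf_addl, hf_addl, hf_smull, hf_smull, hf_alt, hew₀]
      ring
    have hfe : ∀ μ x, f e (σ μ x) = μ⁻¹ * f e x := by
      intro μ x
      rw [hform, hf_addr, hf_addr, hf_smulr, hf_smulr, hf_alt, hew₀]
      ring
    have hinv : ∀ μ : F, μ ≠ 0 → ∀ x, σ μ⁻¹ (σ μ x) = x := by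
      intro μ hμ x
      have hm : μ * μ⁻¹ = 1 := mul_inv_cancel₀ hμ
      rw [hform μ⁻¹ (σ μ x), hfw, hfe, inv_inv, hform μ x]
      rw [show (μ⁻¹ - 1) * (μ * f x w₀) = -((μ - 1) * f x w₀) by
            linear_combination f x w₀ * hm,
          show (μ - 1) * (μ⁻¹ * f e x) = -((μ⁻¹ - 1) * f e x) by
            linear_combination f e x * hm,
          neg_smul, neg_smul]
      abel
    refine ⟨⟨σ lam, σ lam⁻¹, hinv lam hlam, ?_⟩, ?_, ?_, ?_⟩
    · intro x
      have h := hinv lam⁻¹ (inv_ne_zero hlam) x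
      rwa [inv_inv] at h
    · apply hSp_sub
      refine ⟨?_, ?_, ?_⟩
      · intro u v
        show σ lam (u + v) = σ lam u + σ lam v
        rw [hform lam (u + v), hform lam u, hform lam v, hf_addl, hf_addr,
          mul_add, mul_add, add_smul, add_smul]
        abel
      · intro k u
        show σ lam (k • u) = k • σ lam u
        rw [hform lam (k • u), hform lam u, hf_smull, hf_smulr, smul_add, smul_add,
          smul_smul, smul_smul,
          show (lam - 1) * (k * f u w₀) = k * ((lam - 1) * f u w₀) by ring,
          show (lam⁻¹ - 1) * (k * f e u) = k * ((lam⁻¹ - 1) * f e u) by ring]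
      · intro u v
        show f (σ lam u) (σ lam v) = f u v
        rw [hform lam u, hform lam v]
        simp only [hf_addl, hf_addr, hf_smull, hf_smulr]
        rw [hf_alt e, hf_alt w₀, hew₀, hw₀e, hskew u e, hskew w₀ v]
        linear_combination (f u w₀ * f e v - f v w₀ * f e u) * hml
    · intro b
      show σ lam (b • e) = (lam * b) • e
      rw [hform, hf_smull, hf_smulr, hew₀, hf_alt e,
        show (lam - 1) * (b * 1) = lam * b - b by ring,
        show (lam⁻¹ - 1) * (b * 0) = 0 by ring, zero_smul, add_zero, sub_smul]
      abel
    · show σ lam w₀ = lam⁻¹ • w₀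
      rw [hform, hf_alt w₀, hew₀, mul_zero, zero_smul, add_zero, mul_one, sub_smul, one_smul]
      abel
  -- vectors t • w₀ are off the line
  have hnotline : ∀ t : F, t ≠ 0 → ∀ c : F, t • w₀ ≠ c • e := by
    intro t ht c hcon
    have h1 : f e (t • w₀) = f e (c • e) := by rw [hcon]
    rw [hf_smulr, hf_smulr, hew₀, hf_alt] at h1
    apply ht
    linear_combination h1
  by_cases hPL : P ⊆ {z | ∃ a : F, z = a • e}
  · -- main conclusion
    refine ⟨hPL, ⟨{ carrier := {a : Fˣ | (a : F) • e ∈ P}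
                    one_mem' := by simpa using hPe
                    mul_mem' := ?_
                    inv_mem' := ?_ }, fun a => Iff.rfl⟩⟩
    · intro a b ha hb
      show ((a * b : Fˣ) : F) • e ∈ P
      obtain ⟨g, hgG, hgline, -⟩ := exS (a : F) a.ne_zero
      have hge : g e = (a : F) • e := by simpa using hgline 1
      have h := hmove g hgG e hPe (by rw [hge]; exact ha) ((b : F) • e) hb
      rw [hgline (b : F)] at h
      simpa [Units.val_mul] using h
    · intro a ha
      show ((a⁻¹ : Fˣ) : F) • e ∈ P
      obtain ⟨g, hgG, hgline, -⟩ := exS ((a : F)⁻¹) (inv_ne_zero a.ne_zero)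
      have hgae : g ((a : F) • e) = e := by
        rw [hgline (a : F), inv_mul_cancel₀ a.ne_zero, one_smul]
      have h := hmove g hgG ((a : F) • e) ha (by rw [hgae]; exact hPe) e hPe
      have hge : g e = ((a : F)⁻¹) • e := by simpa using hgline 1
      rw [hge] at h
      simpa [Units.val_inv_eq_inv_val] using h
  · exfalso
    -- there is a vector of P off the line
    have hvex : ∃ v, v ∈ P ∧ ∀ c : F, v ≠ c • e := by
      rw [Set.not_subset] at hPL
      obtain ⟨v, hv, hvn⟩ := hPL
      refine ⟨v, hv, fun c hc => hvn ⟨c, hc⟩⟩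
    obtain ⟨v, hv, hvline⟩ := hvex
    -- there is a vector u of P with f e u ≠ 0
    have huex : ∃ u, u ∈ P ∧ f e u ≠ 0 := by
      by_cases h : ∃ u, u ∈ P ∧ f e u ≠ 0
      · exact h
      · push_neg at h
        obtain ⟨w, hew, hvw⟩ := pair e v he0 hvline 1 0
        obtain ⟨g, hgfor, hgG⟩ := exT w 1
        have hgv : g v = v := by
          rw [hgfor, hvw, mul_zero, zero_smul, add_zero]
        have hge : g e ∈ P := hmove g hgG v hv (by rw [hgv]; exact hv) e hPe
        have hfe1 : f e (g e) = 1 := by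
          rw [hgfor, hf_addr, hf_smulr, hf_alt, hew]; ring
        have := h (g e) hge
        rw [hfe1] at this
        exact (one_ne_zero this).elim
    obtain ⟨u, hu, hue⟩ := huex
    -- P is everything nonzero
    have hall : ∀ z : Fin n → F, z ≠ 0 → z ∈ P := by
      intro z hz
      by_cases hzl : ∃ a : F, z = a • e
      · obtain ⟨a, rfl⟩ := hzl
        have ha : a ≠ 0 := by
          rintro rfl
          exact hz (zero_smul F e)
        obtain ⟨g, hgG, hgline, hgw₀⟩ := exS a ha
        have hw₀P : w₀ ∈ P := by
          have h1 := hnotline 1 one_ne_zero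
          rw [one_smul] at h1
          exact stepB u hu hue w₀ h1
        have hgw₀P : g w₀ ∈ P := by
          rw [hgw₀]
          exact stepB u hu hue _ (hnotline a⁻¹ (inv_ne_zero ha))
        have h := hmove g hgG w₀ hw₀P hgw₀P e hPe
        have hge : g e = a • e := by simpa using hgline 1
        rwa [hge] at h
      · push_neg at hzl
        exact stepB u hu hue z hzl
    have hPeq : P = Set.univ \ {0} := by
      ext z
      constructor
      · intro hzP
        exact ⟨trivial, by simpa using hP0 z hzP⟩
      · rintro ⟨-, hz⟩
        exact hall z (by simpa using hz)
    have hcard : P.ncard = Fintype.card (Fin n → F) - 1 := by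
      rw [hPeq, Set.ncard_diff (by simp : ({0} : Set (Fin n → F)) ⊆ Set.univ),
        Set.ncard_univ, Set.ncard_singleton, Nat.card_eq_fintype_card]
    rw [hcard] at hPsmall
    exact lt_irrefl _ hPsmall
end

section
/- Let q be a prime power and V = F_q², let SL(2,q) be the group of linear automorphisms of V of determinant 1, and let e₁ = (1,0). Let G_0 be a subgroup of ΓL(2,q) containing SL(2,q) as a normal subgroup. Suppose P is a nontrivial imprimitive block for the action of G_0 on V ∖ {0} with e₁ ∈ P. Then P ⊆ {a·e₁ : a ∈ F_q} and the set {a ∈ F_q^× : a·e₁ ∈ P} is a subgroup of the multiplicative group F_q^×. -/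
/-!
A block `P` of `G₀` is a block of `SL(2, F)`, so its stabiliser contains the stabiliser of each of
its points. Upper transvections fix `e₁ ∈ P`. If `P` contained a vector `v` off the line
`F e₁`, an upper transvection would move `v` to a multiple of `e₂`, which the lower
transvections fix. As transvections generate `SL(2, F)`, `P` would be `SL(2, F)`-invariant and
so contain the orbit `V ∖ {0}` of `e₁`, which is too large. On the line, `a • e₁ ∈ P` exactly
when `diag(a, a⁻¹)` stabilises `P`, so these `a` form the preimage of a subgroup under a
homomorphism.
-/

open Matrix MatrixGroups MulAction Pointwise

theorem MulAction.IsBlock.smul_mem_iff_mem_stabilizer {G X : Type*} [Group G] [MulAction G X]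
    {B : Set X} (hB : IsBlock G B) {a : X} (ha : a ∈ B) {g : G} :
    g • a ∈ B ↔ g ∈ stabilizer G B :=
  ⟨fun hga ↦ hB.smul_eq_of_mem ha hga, fun hg ↦ hg ▸ Set.smul_mem_smul_set ha⟩

namespace Matrix.SpecialLinearGroup

variable {F : Type*} [Field F]

noncomputable def diag2Hom : Fˣ →* SL(2, F) where
  toFun a := diag2 a a.ne_zero
  map_one' := by ext i j; fin_cases i <;> fin_cases j <;> simp [diag2_coe']
  map_mul' a b := by
    ext i j; fin_cases i <;> fin_cases j <;> simp [diag2_coe', mul_comm]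

lemma diag2Hom_smul_single_zero (a : Fˣ) :
    diag2Hom a • (Pi.single 0 1 : Fin 2 → F) = (a : F) • Pi.single 0 1 :=
  diag2_smul_single_i₁ a.ne_zero

lemma exists_smul_single_zero_eq {w : Fin 2 → F} (hw : w ≠ 0) :
    ∃ g : SL(2, F), g • (Pi.single 0 1 : Fin 2 → F) = w := by
  have hcop : IsCoprime (w 0) (w 1) := by
    by_cases h0 : w 0 = 0
    · have h1 : w 1 ≠ 0 := fun h1 ↦ hw (funext fun i ↦ by fin_cases i <;> assumption)
      exact ⟨0, (w 1)⁻¹, by simp [h1]⟩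
    · exact ⟨(w 0)⁻¹, 0, by simp [h0]⟩
  obtain ⟨g, hg0, hg1⟩ := hcop.exists_SL2_row 0
  refine ⟨g.transpose, funext fun i ↦ ?_⟩
  fin_cases i <;> simp [Matrix.SpecialLinearGroup.smul_def, hg0, hg1]

lemma transvection_smul_eq_smul_single_one {v : Fin 2 → F} (hv : v 1 ≠ 0) :
    transvection (zero_ne_one' (Fin 2)) (-(v 0 / v 1)) • v = v 1 • Pi.single 1 1 := by
  ext i
  fin_cases i <;>
    simp [Matrix.SpecialLinearGroup.smul_def, transvection_coe, mulVec, dotProduct,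
      Fin.sum_univ_two, hv]

theorem _root_.MulAction.IsBlock.compl_zero_subset_of_snd_ne_zero {P : Set (Fin 2 → F)}
    (hP : IsBlock SL(2, F) P) (he : Pi.single 0 1 ∈ P) {v : Fin 2 → F} (hv : v ∈ P)
    (hv1 : v 1 ≠ 0) : {0}ᶜ ⊆ P := by
  have hv' : v 1 • (Pi.single 1 1 : Fin 2 → F) ∈ P := by
    rw [← transvection_smul_eq_smul_single_one hv1, hP.smul_mem_iff_mem_stabilizer hv,
      ← hP.smul_mem_iff_mem_stabilizer he, transvection_smul_single_fst]
    exact he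
  have hstab : stabilizer SL(2, F) P = ⊤ := by
    refine eq_top_iff.2 fun g _ ↦ SL2.transvection_induction _ (fun i j hij c ↦ ?_)
      (fun _ _ ↦ mul_mem) g
    have hline : ∀ i, ∃ a : F, a • Pi.single i 1 ∈ P :=
      Fin.forall_fin_two.2 ⟨⟨1, by rwa [one_smul]⟩, ⟨v 1, hv'⟩⟩
    obtain ⟨a, ha⟩ := hline i
    exact (hP.smul_mem_iff_mem_stabilizer ha).1 (by rwa [smul_comm, transvection_smul_single_fst])
  intro w hw
  obtain ⟨g, rfl⟩ := exists_smul_single_zero_eq hw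
  exact (hP.smul_mem_iff_mem_stabilizer he).2 (hstab ▸ Subgroup.mem_top g)

theorem _root_.MulAction.IsBlock.snd_eq_zero_of_ncard_lt [Finite F] {P : Set (Fin 2 → F)}
    (hP : IsBlock SL(2, F) P) (he : Pi.single 0 1 ∈ P)
    (hsmall : P.ncard < Nat.card (Fin 2 → F) - 1) {v : Fin 2 → F} (hv : v ∈ P) : v 1 = 0 := by
  by_contra hv1
  have hle := Set.ncard_le_ncard (hP.compl_zero_subset_of_snd_ne_zero he hv hv1)
  rw [Set.ncard_compl, Set.ncard_singleton] at hle
  omega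

end Matrix.SpecialLinearGroup

theorem stmt_18_general {F : Type*} [Field F] [Fintype F]
    (G₀ : Subgroup (Equiv.Perm (Fin 2 → F)))
    -- SL(2,q) ⊆ G₀
    (hSL_sub : ∀ g : Equiv.Perm (Fin 2 → F),
        (∃ A : Matrix (Fin 2) (Fin 2) F, A.det = 1 ∧ ∀ v, g v = A.mulVec v) → g ∈ G₀)
    (P : Set (Fin 2 → F))
    (hPe : (fun i : Fin 2 => if (i : ℕ) = 0 then (1 : F) else 0) ∈ P)
    (hPsmall : P.ncard < Fintype.card (Fin 2 → F) - 1)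
    (hPblock : ∀ g ∈ G₀, ⇑g '' P = P ∨ (⇑g '' P) ∩ P = ∅) :
    (P ⊆ {v | ∃ a : F, v = a • fun i : Fin 2 => if (i : ℕ) = 0 then (1 : F) else 0}) ∧
    ∃ U : Subgroup Fˣ, ∀ a : Fˣ,
      ((a : F) • (fun i : Fin 2 => if (i : ℕ) = 0 then (1 : F) else 0) ∈ P ↔ a ∈ U) := by
  have he : (fun i : Fin 2 => if (i : ℕ) = 0 then (1 : F) else 0) = Pi.single 0 1 := by
    ext i; fin_cases i <;> rfl
  rw [he] at hPe ⊢
  have hP : IsBlock SL(2, F) P := isBlock_iff_smul_eq_or_disjoint.2 fun g ↦ by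
    simpa [Set.image_smul, Set.disjoint_iff_inter_eq_empty] using
      hPblock (toPerm g) (hSL_sub _ ⟨g, g.2, fun _ ↦ rfl⟩)
  refine ⟨fun v hv ↦ ⟨v 0, ?_⟩,
    (stabilizer SL(2, F) P).comap Matrix.SpecialLinearGroup.diag2Hom, fun a ↦ ?_⟩
  · ext i
    fin_cases i
    · simp
    · simpa using hP.snd_eq_zero_of_ncard_lt hPe (by rwa [Nat.card_eq_fintype_card]) hv
  · rw [Subgroup.mem_comap, ← hP.smul_mem_iff_mem_stabilizer hPe,
      Matrix.SpecialLinearGroup.diag2Hom_smul_single_zero]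

/-- Lemma 4.8 (part (a)): let q be a prime power, V = F_q², and let G₀ ≤ ΓL(2,q)
contain SL(2,q) as a normal subgroup. If P is a nontrivial imprimitive block of G₀
on V ∖ {0} containing e₁ = (1,0), then P ⊆ ⟨e₁⟩ and {a ∈ F_q^× : a·e₁ ∈ P} is a
subgroup of F_q^×. -/
theorem stmt_18 {F : Type*} [Field F] [Fintype F]
    (G₀ : Subgroup (Equiv.Perm (Fin 2 → F)))
    -- G₀ ≤ ΓL(2,q): every element of G₀ is an additive semilinear bijection
    (hGammaL : ∀ g ∈ G₀, (∀ u v, g (u + v) = g u + g v) ∧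
        ∃ σ : F ≃+* F, ∀ (c : F) (u), g (c • u) = σ c • g u)
    -- SL(2,q) ⊆ G₀
    (hSL_sub : ∀ g : Equiv.Perm (Fin 2 → F),
        (∃ A : Matrix (Fin 2) (Fin 2) F, A.det = 1 ∧ ∀ v, g v = A.mulVec v) → g ∈ G₀)
    -- SL(2,q) is normal in G₀
    (hSL_normal : ∀ g ∈ G₀, ∀ h : Equiv.Perm (Fin 2 → F),
        (∃ A : Matrix (Fin 2) (Fin 2) F, A.det = 1 ∧ ∀ v, h v = A.mulVec v) →
        ∃ A' : Matrix (Fin 2) (Fin 2) F, A'.det = 1 ∧ ∀ v, (g * h * g⁻¹) v = A'.mulVec v)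
    (P : Set (Fin 2 → F))
    (hP0 : ∀ v ∈ P, v ≠ 0)
    (hPe : (fun i : Fin 2 => if (i : ℕ) = 0 then (1 : F) else 0) ∈ P)
    (hPlarge : 1 < P.ncard)
    (hPsmall : P.ncard < Fintype.card (Fin 2 → F) - 1)
    (hPblock : ∀ g ∈ G₀, ⇑g '' P = P ∨ (⇑g '' P) ∩ P = ∅) :
    (P ⊆ {v | ∃ a : F, v = a • fun i : Fin 2 => if (i : ℕ) = 0 then (1 : F) else 0}) ∧
    ∃ U : Subgroup Fˣ, ∀ a : Fˣ,
      ((a : F) • (fun i : Fin 2 => if (i : ℕ) = 0 then (1 : F) else 0) ∈ P ↔ a ∈ U) :=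
  stmt_18_general G₀ hSL_sub P hPe hPsmall hPblock
end

section
/- Let q be a prime power, n ≥ 3 an integer, and V = F_q^n; let SL(n,q) be the group of linear automorphisms of V of determinant 1 and e₁ the first standard basis vector. Let G_0 be a subgroup of ΓL(n,q) containing SL(n,q) as a normal subgroup. Suppose P is a nontrivial imprimitive block for the action of G_0 on V ∖ {0} with e₁ ∈ P. Then P ⊆ {a·e₁ : a ∈ F_q} and the set {a ∈ F_q^× : a·e₁ ∈ P} is a subgroup of the multiplicative group F_q^×. -/
/-!
For `dim V ≥ 3`, `SL(V)` is transitive on linearly independent pairs: send one extended basis to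
another and rescale a third basis vector to fix the determinant. Let `P` be an `SL(V)`-block with
`x ∈ P`. If `P` contained some `v ∉ F x`, then the elements of `SL(V)` fixing `x` would put every
vector off the line `F x` into `P`; as `P` misses some nonzero vector, it misses some `a x`, yet
an element sending `(x, e)` to `(e, a x)` with `e ∉ F x` stabilizes `P` and puts `a x` into `P`.
If `a x ∈ P`, an element of `SL(V)` sending `x` to `a x` stabilizes `P`; it maps `b x ∈ P` to
`a b x` and its inverse maps `x` to `a⁻¹ x`, so these scalars form a subgroup of `Fˣ`.
-/

open Module MulAction
open scoped Pointwise

noncomputable abbrev specialLinearGroup (R M : Type*) [CommRing R] [AddCommGroup M] [Module R M] :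
    Subgroup (M ≃ₗ[R] M) :=
  (LinearEquiv.det : (M ≃ₗ[R] M) →* Rˣ).ker

section

variable {K V : Type*} [Field K] [AddCommGroup V] [Module K V]

theorem Module.Basis.sumExtend_apply_inl {ι : Type*} {x : ι → V} (hx : LinearIndependent K x)
    (i : ι) : Basis.sumExtend hx (.inl i) = x i := by
  rw [Basis.sumExtend, Basis.reindex_apply, Basis.coe_extend]
  rfl

theorem Module.Basis.finite_sumExtendIndex [FiniteDimensional K V] {ι : Type*} {x : ι → V}
    (hx : LinearIndependent K x) : Finite (Basis.sumExtendIndex hx) :=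
  have := Module.Finite.finite_basis (Basis.sumExtend hx)
  Finite.sum_right ι

theorem Module.Basis.natCard_sumExtendIndex [FiniteDimensional K V] {ι : Type*} [Finite ι]
    {x : ι → V} (hx : LinearIndependent K x) :
    Nat.card (Basis.sumExtendIndex hx) = finrank K V - Nat.card ι := by
  have := Basis.finite_sumExtendIndex hx
  rw [finrank_eq_nat_card_basis (Basis.sumExtend hx), Nat.card_sum]
  omega

theorem exists_specialLinearGroup_smul_eq {ι : Type*} [Finite ι] {x y : ι → V}
    (hx : LinearIndependent K x) (hy : LinearIndependent K y) (hι : Nat.card ι < finrank K V) :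
    ∃ g : specialLinearGroup K V, ∀ i, g • x i = y i := by
  classical
  have := Module.finite_of_finrank_pos (Nat.zero_lt_of_lt hι)
  have := Basis.finite_sumExtendIndex hx
  have := Basis.finite_sumExtendIndex hy
  have := Fintype.ofFinite (ι ⊕ Basis.sumExtendIndex hy)
  let b := Basis.sumExtend hy
  obtain ⟨σ⟩ : Nonempty (Basis.sumExtendIndex hx ≃ Basis.sumExtendIndex hy) := by
    rw [← Finite.card_eq, Basis.natCard_sumExtendIndex, Basis.natCard_sumExtendIndex]
  obtain ⟨j⟩ : Nonempty (Basis.sumExtendIndex hy) := by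
    refine (Nat.card_pos_iff.1 ?_).1
    rw [Basis.natCard_sumExtendIndex]
    omega
  let e := (Basis.sumExtend hx).equiv b (Equiv.sumCongr (Equiv.refl ι) σ)
  let w : ι ⊕ Basis.sumExtendIndex hy → Kˣ := Pi.mulSingle (.inr j) (LinearEquiv.det e)⁻¹
  let s := b.equiv (b.unitsSMul w) (Equiv.refl _)
  have hs : LinearEquiv.det s = (LinearEquiv.det e)⁻¹ := by
    ext
    rw [LinearEquiv.coe_det, Basis.det_basis, Basis.det_unitsSMul_self, ← Units.coe_prod,
      Fintype.prod_pi_mulSingle']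
  refine ⟨⟨e.trans s, ?_⟩, fun i => ?_⟩
  · rw [MonoidHom.mem_ker, ← LinearEquiv.mul_eq_trans, map_mul, hs, inv_mul_cancel]
  · have hw : w (.inl i) = 1 := Pi.mulSingle_eq_of_ne Sum.inl_ne_inr _
    rw [Subgroup.smul_def, LinearEquiv.smul_def, LinearEquiv.trans_apply,
      ← Basis.sumExtend_apply_inl hx, Basis.equiv_apply, Equiv.sumCongr_apply, Sum.map_inl,
      Equiv.refl_apply, Basis.equiv_apply, Equiv.refl_apply, Basis.unitsSMul_apply, hw, one_smul,
      Basis.sumExtend_apply_inl]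

theorem exists_specialLinearGroup_smul_eq_pair (h : 2 < finrank K V) {x₁ x₂ y₁ y₂ : V}
    (hx : LinearIndependent K ![x₁, x₂]) (hy : LinearIndependent K ![y₁, y₂]) :
    ∃ g : specialLinearGroup K V, g • x₁ = y₁ ∧ g • x₂ = y₂ := by
  obtain ⟨g, hg⟩ := exists_specialLinearGroup_smul_eq hx hy (by simpa using h)
  exact ⟨g, by simpa using hg 0, by simpa using hg 1⟩

theorem exists_notMem_span_singleton (h : 1 < finrank K V) (x : V) : ∃ e, e ∉ K ∙ x := by
  by_contra! H
  have hx : K ∙ x = ⊤ := eq_top_iff.2 fun v _ => H v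
  have := finrank_span_le_card (R := K) ({x} : Set V)
  rw [hx, finrank_top] at this
  simp at this
  omega

theorem linearIndependent_pair_of_notMem_span {x y : V} (hx : x ≠ 0) (hy : y ∉ K ∙ x) :
    LinearIndependent K ![x, y] :=
  (LinearIndependent.pair_iff' hx).2 fun a h => hy (Submodule.mem_span_singleton.2 ⟨a, h⟩)

namespace MulAction.IsBlock

variable {P : Set V} (hP : IsBlock (specialLinearGroup K V) P) (h : 2 < finrank K V)
include hP h

theorem mem_of_linearIndependent_pair {x₁ x₂ y₁ y₂ : V} (hx : LinearIndependent K ![x₁, x₂])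
    (hy : LinearIndependent K ![y₁, y₂]) (hx₁ : x₁ ∈ P) (hy₁ : y₁ ∈ P) (hx₂ : x₂ ∈ P) : y₂ ∈ P := by
  obtain ⟨g, hg₁, hg₂⟩ := exists_specialLinearGroup_smul_eq_pair h hx hy
  rw [← hP.smul_eq_of_mem hx₁ (hg₁ ▸ hy₁), ← hg₂]
  exact Set.smul_mem_smul_set hx₂

theorem subset_span_singleton {x : V} (hx : x ≠ 0) (hxP : x ∈ P) (hmiss : ∃ w ≠ 0, w ∉ P) :
    P ⊆ K ∙ x := by
  intro v hvP
  by_contra hv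
  have hcompl : ∀ u ∉ K ∙ x, u ∈ P := fun u hu =>
    hP.mem_of_linearIndependent_pair h (linearIndependent_pair_of_notMem_span hx hv)
      (linearIndependent_pair_of_notMem_span hx hu) hxP hxP hvP
  obtain ⟨w, hw0, hwP⟩ := hmiss
  obtain ⟨a, rfl⟩ := Submodule.mem_span_singleton.1 (not_not.1 (mt (hcompl w) hwP))
  have ha : a ≠ 0 := by rintro rfl; simp at hw0
  obtain ⟨e, he⟩ := exists_notMem_span_singleton (K := K) (by omega) x
  refine hwP (hP.mem_of_linearIndependent_pair h (linearIndependent_pair_of_notMem_span hx he) ?_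
    hxP (hcompl e he) (hcompl e he))
  rw [LinearIndependent.pair_symm_iff]
  refine linearIndependent_pair_of_notMem_span hw0 ?_
  rwa [Submodule.span_singleton_smul_eq (IsUnit.mk0 a ha)]

theorem exists_smul_eq_self_and_smul_eq {x : V} (hx : x ≠ 0) (hxP : x ∈ P) {a : K} (ha : a ≠ 0)
    (haP : a • x ∈ P) : ∃ g : specialLinearGroup K V, g • P = P ∧ g • x = a • x := by
  obtain ⟨e, he⟩ := exists_notMem_span_singleton (K := K) (by omega) x
  obtain ⟨g, hgx, -⟩ := exists_specialLinearGroup_smul_eq_pair h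
    (linearIndependent_pair_of_notMem_span hx he)
    (linearIndependent_pair_of_notMem_span (smul_ne_zero ha hx)
      (by rwa [Submodule.span_singleton_smul_eq (IsUnit.mk0 a ha)]))
  exact ⟨g, hP.smul_eq_of_mem hxP (hgx ▸ haP), hgx⟩

theorem exists_subgroup_units_smul_mem_iff {x : V} (hx : x ≠ 0) (hxP : x ∈ P) :
    ∃ U : Subgroup Kˣ, ∀ a : Kˣ, (a : K) • x ∈ P ↔ a ∈ U := by
  refine ⟨{ carrier := {a | (a : K) • x ∈ P}, mul_mem' := ?_, one_mem' := ?_, inv_mem' := ?_ },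
    fun _ => Iff.rfl⟩
  · intro a b (ha : (a : K) • x ∈ P) (hb : (b : K) • x ∈ P)
    obtain ⟨g, hgP, hgx⟩ := hP.exists_smul_eq_self_and_smul_eq h hx hxP a.ne_zero ha
    have := Set.smul_mem_smul_set (a := g) hb
    rwa [hgP, smul_comm, hgx, smul_smul, mul_comm] at this
  · simpa using hxP
  · intro a (ha : (a : K) • x ∈ P)
    obtain ⟨g, hgP, hgx⟩ := hP.exists_smul_eq_self_and_smul_eq h hx hxP a.ne_zero ha
    have hinv : ((a⁻¹ : Kˣ) : K) • x = g⁻¹ • x := by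
      rw [eq_inv_smul_iff, smul_comm, hgx, smul_smul, Units.inv_mul, one_smul]
    change _ • x ∈ P
    rw [hinv, ← inv_smul_eq_iff.2 hgP.symm]
    exact Set.smul_mem_smul_set hxP

end MulAction.IsBlock

end

theorem Set.exists_ne_notMem_of_ncard_lt {α : Type*} [Finite α] {s : Set α} (a : α)
    (hs : s.ncard < Nat.card α - 1) : ∃ b ≠ a, b ∉ s := by
  by_contra! H
  have := Set.ncard_le_ncard fun b (hb : b ∈ ({a}ᶜ : Set α)) => H b hb
  rw [Set.ncard_compl, Set.ncard_singleton] at this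
  omega

theorem isBlock_specialLinearGroup_of_isBlock_perm {F ι : Type*} [Field F] [Fintype ι]
    [DecidableEq ι] {G₀ : Subgroup (Equiv.Perm (ι → F))}
    (hSL : ∀ g : Equiv.Perm (ι → F),
      (∃ A : Matrix ι ι F, A.det = 1 ∧ ∀ v, g v = A.mulVec v) → g ∈ G₀)
    {P : Set (ι → F)} (hP : ∀ g ∈ G₀, ⇑g '' P = P ∨ (⇑g '' P) ∩ P = ∅) :
    IsBlock (specialLinearGroup F (ι → F)) P := by
  refine isBlock_iff_smul_eq_or_disjoint.2 fun g => ?_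
  let f : (ι → F) ≃ₗ[F] (ι → F) := g
  have hdet : (LinearMap.toMatrix' f.toLinearMap).det = 1 := by
    rw [LinearMap.det_toMatrix', ← LinearEquiv.coe_det, g.2, Units.val_one]
  have hg := hSL f.toEquiv ⟨_, hdet, fun v => (LinearMap.toMatrix'_mulVec _ v).symm⟩
  rw [← Set.image_smul, Set.disjoint_iff_inter_eq_empty]
  exact hP _ hg

theorem stmt_19_general {F : Type*} [Field F] [Fintype F] (n : ℕ) (hn : 3 ≤ n)
    (G₀ : Subgroup (Equiv.Perm (Fin n → F)))
    -- SL(2,q) ⊆ G₀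
    (hSL_sub : ∀ g : Equiv.Perm (Fin n → F),
        (∃ A : Matrix (Fin n) (Fin n) F, A.det = 1 ∧ ∀ v, g v = A.mulVec v) → g ∈ G₀)
    (P : Set (Fin n → F))
    (hPe : (fun i : Fin n => if (i : ℕ) = 0 then (1 : F) else 0) ∈ P)
    (hPsmall : P.ncard < Fintype.card (Fin n → F) - 1)
    (hPblock : ∀ g ∈ G₀, ⇑g '' P = P ∨ (⇑g '' P) ∩ P = ∅) :
    (P ⊆ {v | ∃ a : F, v = a • fun i : Fin n => if (i : ℕ) = 0 then (1 : F) else 0}) ∧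
    ∃ U : Subgroup Fˣ, ∀ a : Fˣ,
      ((a : F) • (fun i : Fin n => if (i : ℕ) = 0 then (1 : F) else 0) ∈ P ↔ a ∈ U) := by
  set e₁ : Fin n → F := fun i => if (i : ℕ) = 0 then 1 else 0
  have hP := isBlock_specialLinearGroup_of_isBlock_perm hSL_sub hPblock
  have hdim : 2 < finrank F (Fin n → F) := by rw [finrank_fin_fun]; omega
  have he₁ : e₁ ≠ 0 := fun h => by simpa [e₁] using congrFun h ⟨0, by omega⟩
  obtain ⟨w, hw0, hwP⟩ :=
    Set.exists_ne_notMem_of_ncard_lt (0 : Fin n → F) (by rwa [Nat.card_eq_fintype_card])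
  refine ⟨fun v hv => ?_, hP.exists_subgroup_units_smul_mem_iff hdim he₁ hPe⟩
  obtain ⟨a, rfl⟩ := Submodule.mem_span_singleton.1
    (hP.subset_span_singleton hdim he₁ hPe ⟨w, hw0, hwP⟩ hv)
  exact ⟨a, rfl⟩

/-- Section 4.4: let q be a prime power, n ≥ 3, V = F_q^n, and let G₀ ≤ ΓL(n,q)
contain SL(n,q) as a normal subgroup. If P is a nontrivial imprimitive block of G₀
on V ∖ {0} containing e₁, then P ⊆ ⟨e₁⟩ and {a ∈ F_q^× : a·e₁ ∈ P} is a
subgroup of F_q^×. -/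
theorem stmt_19 {F : Type*} [Field F] [Fintype F] (n : ℕ) (hn : 3 ≤ n)
    (G₀ : Subgroup (Equiv.Perm (Fin n → F)))
    -- G₀ ≤ ΓL(2,q): every element of G₀ is an additive semilinear bijection
    (hGammaL : ∀ g ∈ G₀, (∀ u v, g (u + v) = g u + g v) ∧
        ∃ σ : F ≃+* F, ∀ (c : F) (u), g (c • u) = σ c • g u)
    -- SL(2,q) ⊆ G₀
    (hSL_sub : ∀ g : Equiv.Perm (Fin n → F),
        (∃ A : Matrix (Fin n) (Fin n) F, A.det = 1 ∧ ∀ v, g v = A.mulVec v) → g ∈ G₀)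
    -- SL(2,q) is normal in G₀
    (hSL_normal : ∀ g ∈ G₀, ∀ h : Equiv.Perm (Fin n → F),
        (∃ A : Matrix (Fin n) (Fin n) F, A.det = 1 ∧ ∀ v, h v = A.mulVec v) →
        ∃ A' : Matrix (Fin n) (Fin n) F, A'.det = 1 ∧ ∀ v, (g * h * g⁻¹) v = A'.mulVec v)
    (P : Set (Fin n → F))
    (hP0 : ∀ v ∈ P, v ≠ 0)
    (hPe : (fun i : Fin n => if (i : ℕ) = 0 then (1 : F) else 0) ∈ P)
    (hPlarge : 1 < P.ncard)
    (hPsmall : P.ncard < Fintype.card (Fin n → F) - 1)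
    (hPblock : ∀ g ∈ G₀, ⇑g '' P = P ∨ (⇑g '' P) ∩ P = ∅) :
    (P ⊆ {v | ∃ a : F, v = a • fun i : Fin n => if (i : ℕ) = 0 then (1 : F) else 0}) ∧
    ∃ U : Subgroup Fˣ, ∀ a : Fˣ,
      ((a : F) • (fun i : Fin n => if (i : ℕ) = 0 then (1 : F) else 0) ∈ P ↔ a ∈ U) :=
  stmt_19_general n hn G₀ hSL_sub P hPe hPsmall hPblock
end
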